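/- Picone's inequality: let U ⊆ ℝ^N be open and let u, v : U → ℝ be differentiable on U with u > 0 on U. Then for every x ∈ U the function v²/u is differentiable at x and ⟨∇u(x), ∇(v²/u)(x)⟩ ≤ |∇v(x)|². -/

import Mathlib

/-!
With `t = v / u`, the quotient rule gives `∇(v² / u) = 2t ∇v - t² ∇u`, hence
`|∇v|² - ⟨∇u, ∇(v² / u)⟩ = |∇v - t ∇u|² ≥ 0`.
-/

open RealInnerProductSpace

variable {F : Type*} [NormedAddCommGroup F] [InnerProductSpace ℝ F]

theorem HasGradientAt.sq_div [CompleteSpace F] {u v : F → ℝ} {u' v' x : F}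
    (hu : HasGradientAt u u' x) (hv : HasGradientAt v v' x) (hux : u x ≠ 0) :
    HasGradientAt (fun y => v y ^ 2 / u y) ((2 * (v x / u x)) • v' - (v x / u x) ^ 2 • u') x := by
  rw [hasGradientAt_iff_hasFDerivAt] at *
  have hprod := (hv.pow 2).mul ((hasDerivAt_inv hux).comp_hasFDerivAt x hu)
  refine (hprod.congr_of_eventuallyEq (.of_forall fun y => div_eq_mul_inv _ _)).congr_fderiv ?_
  rw [map_sub, map_smul, map_smul]
  ext w
  simp only [Function.comp_apply, sub_apply, add_apply, smul_apply, smul_eq_mul, nsmul_eq_mul]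
  field_simp
  ring

theorem real_inner_two_mul_smul_sub_sq_smul_le (a b : F) (t : ℝ) :
    ⟪a, (2 * t) • b - t ^ 2 • a⟫ ≤ ‖b‖ ^ 2 := by
  have h := norm_sub_sq_real b (t • a)
  rw [inner_smul_right, norm_smul, Real.norm_eq_abs, mul_pow, sq_abs] at h
  rw [inner_sub_right, inner_smul_right, inner_smul_right, real_inner_self_eq_norm_sq,
    real_inner_comm]
  linarith [sq_nonneg ‖b - t • a‖]

theorem picone_inequality {N : ℕ} {U : Set (EuclideanSpace ℝ (Fin N))}
    {u v : EuclideanSpace ℝ (Fin N) → ℝ}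
    (hu : ∀ x ∈ U, DifferentiableAt ℝ u x) (hv : ∀ x ∈ U, DifferentiableAt ℝ v x)
    (hupos : ∀ x ∈ U, 0 < u x) :
    ∀ x ∈ U, DifferentiableAt ℝ (fun y => (v y) ^ 2 / u y) x ∧
      (inner ℝ (gradient u x) (gradient (fun y => (v y) ^ 2 / u y) x) : ℝ)
        ≤ ‖gradient v x‖ ^ 2 := by
  intro x hx
  have hgrad := (hu x hx).hasGradientAt.sq_div (hv x hx).hasGradientAt (hupos x hx).ne'
  exact ⟨hgrad.differentiableAt,
    hgrad.gradient ▸ real_inner_two_mul_smul_sub_sq_smul_le _ _ _⟩
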